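/- arXiv:math/0302347 — 5 statements merged into one kernel-verified Lean document; each statement's English description precedes it below -/
import Mathlib

section
/- Let (E, ≤, ε) be a nonempty heap with pieces in P and concurrency relation 𝒞, let α be a minimal element of E, and let F be the subheap of E on the subset E \ {α}. Suppose that F is ranked, that every minimal balanced subinterval of E is ranked, and that the concurrency subgraph of E contains no circuits. If β, γ ∈ F lie in the same connected component of the poset F and both α < β and α < γ are covering relations in E, then ρ(β) = ρ(γ) for every rank function ρ of F. -/
/-- `ρ` is a rank function for the poset `E`:
it increases by exactly 1 along covering relations. -/
def IsRankFunction {E : Type*} [PartialOrder E] (ρ : E → ℤ) : Prop :=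
  ∀ a b : E, a ⋖ b → ρ b = ρ a + 1

/-- A poset is ranked if it admits a rank function. -/
def Ranked (E : Type*) [PartialOrder E] : Prop :=
  ∃ ρ : E → ℤ, IsRankFunction ρ

/-- Two elements lie in the same connected component of the poset: the
equivalence relation generated by the covering relation. -/
def SameComponent {E : Type*} [PartialOrder E] (a b : E) : Prop :=
  Relation.EqvGen (fun x y : E => x ⋖ y) a b

/-- The heap axioms for a labelling `ε : E → P` of a poset `E` with
concurrency relation `C` on the pieces `P`. -/
def IsHeap {E P : Type*} [PartialOrder E] (C : P → P → Prop) (ε : E → P) : Prop :=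
  (∀ α β : E, C (ε α) (ε β) → α ≤ β ∨ β ≤ α) ∧
  (∀ α β : E, α ≤ β ↔ Relation.TransGen (fun x y : E => x ≤ y ∧ C (ε x) (ε y)) α β)

/-- `[a, b]` is a minimal balanced subinterval: `a ≠ b`, `ε a = ε b`, and the
only elements of `[a, b]` with label `ε a` are `a` and `b`. -/
def MinBalanced {E P : Type*} [PartialOrder E] (ε : E → P) (a b : E) : Prop :=
  a < b ∧ ε a = ε b ∧ ∀ c ∈ Set.Icc a b, ε c = ε a → c = a ∨ c = b

/-- The set `S_{[a,b]}` of elements of `[a, b]` whose label is distinct from,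
but concurrent with, the label of `a`. -/
def intervalS {E P : Type*} [PartialOrder E] (C : P → P → Prop) (ε : E → P)
    (a b : E) : Set E :=
  {c | c ∈ Set.Icc a b ∧ ε c ≠ ε a ∧ C (ε a) (ε c)}

/-- The concurrency subgraph of the heap (the simple graph on the labels
occurring in `E`, with distinct labels adjacent iff concurrent) is acyclic. -/
def NoCircuits {E P : Type*} [PartialOrder E] (C : P → P → Prop) (ε : E → P) : Prop :=
  (SimpleGraph.fromRel (fun v w : Set.range ε => C v.1 w.1)).IsAcyclic

/-!
Both β and γ are concurrent with α. If they were concurrent with each other they would be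
comparable covers of α, hence equal; otherwise the labels of α, β, γ are pairwise distinct.
A path of covers from β to γ inside `F` projects to a walk from `ε β` to `ε γ` in the
concurrency graph, and since `ε β — ε α — ε γ` is the unique path between these labels in a
forest, the walk must visit `ε α`: some `d ≠ α` carries the label of `α`. The first such `d`
above `α` closes a minimal balanced interval `[α, δ]` containing β and γ, ranked by some `σ`.
On `[β, δ]` and `[γ, δ]` the rank functions `ρ` and `σ` grow alike, and `σ β = σ α + 1 = σ γ`.
-/

section RankFunction

variable {X Y : Type*} [PartialOrder X] [PartialOrder Y]

theorem IsRankFunction.comp {ρ : Y → ℤ} (hρ : IsRankFunction ρ) {f : X → Y}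
    (hf : ∀ a b, a ⋖ b → f a ⋖ f b) : IsRankFunction (ρ ∘ f) :=
  fun a b h => hρ _ _ (hf a b h)

theorem IsRankFunction.sub_eq_sub_of_le [LocallyFiniteOrder X] {ρ₁ ρ₂ : X → ℤ}
    (h₁ : IsRankFunction ρ₁) (h₂ : IsRankFunction ρ₂) {a b : X} (hab : a ≤ b) :
    ρ₁ b - ρ₁ a = ρ₂ b - ρ₂ a := by
  rw [le_iff_reflTransGen_covBy] at hab
  induction hab with
  | refl => simp
  | tail _ hcov ih => rw [h₁ _ _ hcov, h₂ _ _ hcov]; linarith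

theorem Set.OrdConnected.covBy_coe_iff {s : Set X} (hs : s.OrdConnected) {x y : s} :
    (x : X) ⋖ y ↔ x ⋖ y :=
  Set.OrdConnected.apply_covBy_apply_iff (OrderEmbedding.subtype (· ∈ s)) (by simpa using hs)

theorem IsRankFunction.sub_eq_sub_of_forall_mem_Icc [LocallyFiniteOrder X] {p q : X → Prop}
    {ρ : Subtype p → ℤ} {σ : Subtype q → ℤ} (hρ : IsRankFunction ρ) (hσ : IsRankFunction σ)
    {x y : X} (hxy : x ≤ y) (hp : ∀ z ∈ Set.Icc x y, p z) (hq : ∀ z ∈ Set.Icc x y, q z) :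
    ρ ⟨y, hp y (Set.right_mem_Icc.2 hxy)⟩ - ρ ⟨x, hp x (Set.left_mem_Icc.2 hxy)⟩ =
      σ ⟨y, hq y (Set.right_mem_Icc.2 hxy)⟩ - σ ⟨x, hq x (Set.left_mem_Icc.2 hxy)⟩ := by
  have hcov {r : X → Prop} (hr : ∀ z ∈ Set.Icc x y, r z) (a b : Set.Icc x y) (h : a ⋖ b) :
      (⟨a, hr a a.2⟩ : Subtype r) ⋖ ⟨b, hr b b.2⟩ :=
    CovBy.of_image (OrderEmbedding.subtype r) (Set.ordConnected_Icc.covBy_coe_iff.2 h)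
  classical
  exact (hρ.comp (hcov hp)).sub_eq_sub_of_le (hσ.comp (hcov hq))
    (a := ⟨x, Set.left_mem_Icc.2 hxy⟩) (b := ⟨y, Set.right_mem_Icc.2 hxy⟩) hxy

theorem IsRankFunction.eq_of_covBy [LocallyFiniteOrder X] {p : X → Prop} {ρ : Subtype p → ℤ}
    (hρ : IsRankFunction ρ) {a d : X} {σ : Set.Icc a d → ℤ} (hσ : IsRankFunction σ)
    (hp : ∀ z ∈ Set.Ioc a d, p z) {b c : Subtype p} (hb : a ⋖ b) (hc : a ⋖ c)
    (hbd : (b : X) ≤ d) (hcd : (c : X) ≤ d) : ρ b = ρ c := by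
  have had : a ≤ d := hb.le.trans hbd
  have hd : p d := hp d ⟨hb.lt.trans_le hbd, le_rfl⟩
  have hrank {x : Subtype p} (hx : a ⋖ x) (hxd : (x : X) ≤ d) :
      ρ x = ρ ⟨d, hd⟩ - σ ⟨d, had, le_rfl⟩ + σ ⟨a, le_rfl, had⟩ + 1 := by
    have e := hρ.sub_eq_sub_of_forall_mem_Icc hσ hxd
      (fun z hz => hp z ⟨hx.lt.trans_le hz.1, hz.2⟩) fun z hz => ⟨hx.le.trans hz.1, hz.2⟩
    have s := hσ ⟨a, le_rfl, had⟩ ⟨x, hx.le, hxd⟩ (Set.ordConnected_Icc.covBy_coe_iff.1 hx)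
    linarith
  rw [hrank hb hbd, hrank hc hcd]

end RankFunction

namespace IsHeap

variable {E P : Type*} [PartialOrder E] {C : P → P → Prop} {ε : E → P}

theorem concurrent_of_covBy (hheap : IsHeap C ε) {u v : E} (h : u ⋖ v) : C (ε u) (ε v) := by
  suffices ∀ a, Relation.TransGen (fun x y => x ≤ y ∧ C (ε x) (ε y)) a v → a = u →
      C (ε u) (ε v) from this u ((hheap.2 u v).1 h.le) rfl
  intro a ha
  induction ha using Relation.TransGen.head_induction_on with
  | single hav => rintro rfl; exact hav.2
  | head hac hcv ih =>
    rintro rfl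
    rcases h.eq_or_eq hac.1 ((hheap.2 _ _).2 hcv) with rfl | rfl
    · exact ih rfl
    · exact hac.2

theorem eq_of_covBy_of_concurrent (hheap : IsHeap C ε) {a b c : E} (hb : a ⋖ b) (hc : a ⋖ c)
    (hbc : C (ε b) (ε c)) : b = c := by
  rcases hheap.1 b c hbc with h | h
  · exact (hc.eq_or_eq hb.le h).resolve_left hb.ne'
  · exact ((hb.eq_or_eq hc.le h).resolve_left hc.ne').symm

theorem lt_of_covBy_of_label_eq (hheap : IsHeap C ε) {a b d : E} (hab : a ⋖ b) (had : a < d)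
    (hd : ε d = ε a) (hb : ε b ≠ ε a) : b < d := by
  have hne : b ≠ d := by rintro rfl; exact hb hd
  rcases hheap.1 d b (hd ▸ hheap.concurrent_of_covBy hab) with h | h
  · exact absurd ((hab.eq_or_eq had.le h).resolve_left had.ne') hne.symm
  · exact h.lt_of_ne hne

theorem subheap_le_iff (hheap : IsHeap C ε) {p : E → Prop} (hp : IsUpperSet {x | p x})
    {x y : Subtype p} :
    Relation.TransGen (fun u v : Subtype p => (u : E) ≤ v ∧ C (ε u) (ε v)) x y ↔ (x : E) ≤ y := by
  refine ⟨fun h => (hheap.2 _ _).2 (h.lift Subtype.val fun _ _ => id), fun h => ?_⟩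
  obtain ⟨x, hx⟩ := x
  obtain ⟨y, hy⟩ := y
  replace h := (hheap.2 x y).1 h
  induction h using Relation.TransGen.head_induction_on with
  | single hxy => exact .single hxy
  | head hxz _ ih => exact .head (b := ⟨_, hp hxz.1 hx⟩) hxz (ih _)

end IsHeap

theorem exists_minBalanced_of_lt {E P : Type*} [PartialOrder E] [WellFoundedLT E] (ε : E → P)
    {a d : E} (had : a < d) (hd : ε d = ε a) : ∃ b, MinBalanced ε a b := by
  obtain ⟨b, ⟨hab, hb⟩, hmin⟩ := wellFounded_lt.has_min {x | a < x ∧ ε x = ε a} ⟨d, had, hd⟩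
  refine ⟨b, hab, hb.symm, fun c ⟨hac, hcb⟩ hc => ?_⟩
  rcases hac.eq_or_lt with rfl | hac
  · exact .inl rfl
  · exact .inr (hcb.eq_of_not_lt (hmin c ⟨hac, hc⟩))

namespace SimpleGraph

variable {V : Type*} {G : SimpleGraph V}

theorem Reachable.of_eqvGen {X : Type*} {r : X → X → Prop} {f : X → V}
    (hf : ∀ x y, r x y → f x = f y ∨ G.Adj (f x) (f y)) {x y : X}
    (h : Relation.EqvGen r x y) : G.Reachable (f x) (f y) := by
  induction h with
  | rel x y hxy =>
    rcases hf x y hxy with h | h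
    · exact h ▸ .refl _
    · exact h.reachable
  | refl => rfl
  | symm _ _ _ ih => exact ih.symm
  | trans _ _ _ _ _ ih₁ ih₂ => exact ih₁.trans ih₂

theorem IsAcyclic.not_reachable_induce_compl (hG : G.IsAcyclic) {a b c : V} (hab : G.Adj a b)
    (hac : G.Adj a c) (hbc : b ≠ c) :
    ¬ (G.induce {a}ᶜ).Reachable ⟨b, hab.ne'⟩ ⟨c, hac.ne'⟩ := by
  classical
  rintro ⟨w⟩
  let w' : G.Walk b c := w.map (Embedding.induce _).toHom
  let p : G.Path b c := ⟨.cons hab.symm hac.toWalk, by simp [hab.ne', hbc, hac.ne]⟩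
  have ha : a ∈ w'.support := by
    apply w'.support_toPath_subset_support
    rw [← (hG.subsingleton_path b c).elim p w'.toPath]
    simp [p]
  obtain ⟨v, -, hv⟩ := List.mem_map.1 (w.support_map _ ▸ ha)
  exact v.2 hv

end SimpleGraph

section Concurrency

variable {E P : Type*} {C : P → P → Prop} {ε : E → P}

def concurrencyGraph (C : P → P → Prop) (ε : E → P) : SimpleGraph (Set.range ε) :=
  SimpleGraph.fromRel fun v w => C v w

theorem concurrencyGraph_adj {x y : E} (hne : ε x ≠ ε y) (h : C (ε x) (ε y)) :
    (concurrencyGraph C ε).Adj (Set.rangeFactorization ε x) (Set.rangeFactorization ε y) :=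
  (SimpleGraph.fromRel_adj _ _ _).2 ⟨fun e => hne (congrArg Subtype.val e), .inl h⟩

theorem NoCircuits.exists_ne_label_eq [PartialOrder E] (hacyc : NoCircuits C ε) {α : E}
    {β γ : {x : E // x ≠ α}} (hβ : C (ε α) (ε β)) (hγ : C (ε α) (ε γ)) (hβγ : ε β ≠ ε γ)
    (hcomp : Relation.EqvGen (fun x y : {x : E // x ≠ α} => C (ε x) (ε y)) β γ) :
    ∃ x, x ≠ α ∧ ε x = ε α := by
  by_contra! hlabel
  let f (x : {x : E // x ≠ α}) : ({Set.rangeFactorization ε α}ᶜ : Set (Set.range ε)) :=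
    ⟨Set.rangeFactorization ε x, fun e => hlabel x x.2 (congrArg Subtype.val e)⟩
  refine (hacyc : (concurrencyGraph C ε).IsAcyclic).not_reachable_induce_compl
    (concurrencyGraph_adj (hlabel β β.2).symm hβ) (concurrencyGraph_adj (hlabel γ γ.2).symm hγ)
    (fun e => hβγ (congrArg Subtype.val e)) (SimpleGraph.Reachable.of_eqvGen (f := f) ?_ hcomp)
  intro x y hxy
  by_cases e : ε x = ε y
  · exact .inl (Subtype.ext (Subtype.ext e))
  · exact .inr (concurrencyGraph_adj e hxy)

end Concurrency

theorem rank_eq_of_covers_of_sameComponent_general {E P : Type*} [PartialOrder E]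
    [Finite E] (C : P → P → Prop) (hrefl : Reflexive C)
    (ε : E → P) (hheap : IsHeap C ε)
    (hacyclic : NoCircuits C ε)
    (α : E) (hαmin : ∀ x : E, x ≤ α → x = α)
    (instF : PartialOrder {x : E // x ≠ α})
    (hFle : ∀ x y : {x : E // x ≠ α},
      instF.le x y ↔ Relation.TransGen
        (fun u v : {x : E // x ≠ α} => (u : E) ≤ (v : E) ∧ C (ε u) (ε v)) x y)
    (hmbi : ∀ a b : E, MinBalanced ε a b → Ranked (Set.Icc a b))
    (β γ : {x : E // x ≠ α})
    (hcomp : @SameComponent _ instF β γ)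
    (hβ : α ⋖ (β : E)) (hγ : α ⋖ (γ : E))
    (ρ : {x : E // x ≠ α} → ℤ) (hρ : @IsRankFunction _ instF ρ) :
    ρ β = ρ γ := by
  have hF : IsUpperSet {x : E | x ≠ α} := fun x y hxy hx hy => hx (hαmin x (hy ▸ hxy))
  obtain rfl : instF = Subtype.partialOrder _ :=
    PartialOrder.ext fun x y => (hFle x y).trans (hheap.subheap_le_iff hF)
  by_cases hconc : C (ε β) (ε γ) ∨ C (ε γ) (ε β)
  · rcases hconc with h | h
    · exact congrArg ρ (Subtype.ext (hheap.eq_of_covBy_of_concurrent hβ hγ h))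
    · exact congrArg ρ (Subtype.ext (hheap.eq_of_covBy_of_concurrent hγ hβ h)).symm
  push Not at hconc
  have hβα : ε β ≠ ε α := fun h => hconc.1 (h ▸ hheap.concurrent_of_covBy hγ)
  have hγα : ε γ ≠ ε α := fun h => hconc.2 (h ▸ hheap.concurrent_of_covBy hβ)
  obtain ⟨d, hdα, hd⟩ := hacyclic.exists_ne_label_eq (hheap.concurrent_of_covBy hβ)
    (hheap.concurrent_of_covBy hγ) (fun h => hconc.1 (h ▸ hrefl _))
    (hcomp.mono fun x y h => hheap.concurrent_of_covBy (hF.ordConnected.covBy_coe_iff.2 h))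
  have hαd : α < d :=
    ((hheap.1 α d (hd ▸ hrefl _)).resolve_right (hdα ∘ hαmin d)).lt_of_ne hdα.symm
  obtain ⟨δ, hδ⟩ := exists_minBalanced_of_lt ε hαd hd
  obtain ⟨σ, hσ⟩ := hmbi α δ hδ
  have hβδ := hheap.lt_of_covBy_of_label_eq hβ hδ.1 hδ.2.1.symm hβα
  have hγδ := hheap.lt_of_covBy_of_label_eq hγ hδ.1 hδ.2.1.symm hγα
  let _ := LocallyFiniteOrder.ofFiniteIcc fun (a b : E) => Set.toFinite (Set.Icc a b)
  exact hρ.eq_of_covBy hσ (fun _ hz => hz.1.ne') hβ hγ hβδ.le hγδ.le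

/-- Lemma 2.2.1: let E be a nonempty heap with acyclic concurrency subgraph,
α a minimal element of E, and F the subheap on E \ {α} (whose order, given by
the partial order instF, is the transitive closure of the subheap relation).
If F is ranked and every minimal balanced subinterval of E is ranked, and
β, γ ∈ F lie in the same connected component of F with α < β and α < γ
covering relations in E, then ρ(β) = ρ(γ) for every rank function ρ of F. -/
theorem rank_eq_of_covers_of_sameComponent {E P : Type*} [PartialOrder E]
    [Finite E] [Nonempty E] (C : P → P → Prop) (hrefl : Reflexive C)
    (hsymm : Symmetric C) (ε : E → P) (hheap : IsHeap C ε)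
    (hacyclic : NoCircuits C ε)
    (α : E) (hαmin : ∀ x : E, x ≤ α → x = α)
    (instF : PartialOrder {x : E // x ≠ α})
    (hFle : ∀ x y : {x : E // x ≠ α},
      instF.le x y ↔ Relation.TransGen
        (fun u v : {x : E // x ≠ α} => (u : E) ≤ (v : E) ∧ C (ε u) (ε v)) x y)
    (hFranked : @Ranked _ instF)
    (hmbi : ∀ a b : E, MinBalanced ε a b → Ranked (Set.Icc a b))
    (β γ : {x : E // x ≠ α})
    (hcomp : @SameComponent _ instF β γ)
    (hβ : α ⋖ (β : E)) (hγ : α ⋖ (γ : E))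
    (ρ : {x : E // x ≠ α} → ℤ) (hρ : @IsRankFunction _ instF ρ) :
    ρ β = ρ γ :=
  rank_eq_of_covers_of_sameComponent_general C hrefl ε hheap hacyclic α hαmin instF hFle hmbi β γ
    hcomp hβ hγ ρ hρ
end

section
/- There exist a set P with a reflexive and symmetric relation 𝒞 and a heap (E, ≤, ε) with pieces in P and concurrency relation 𝒞 such that every subinterval of E is ranked but E itself is not ranked. (One may take P = {1,2,3,4,5} with distinct a, b concurrent iff {a,b} ∈ {{1,2},{2,3},{3,4},{4,5},{5,1}}, so the concurrency graph is a pentagon.) -/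
/-- A helper predicate: the subinterval [a, b] of E (with the induced order)
is a ranked poset. -/
def SubintervalRanked {E : Type*} [PartialOrder E] (a b : E) : Prop :=
  Ranked (Set.Icc a b)

lemma IsChain.ranked {α : Type*} [PartialOrder α] {s : Set α} [Finite s]
    (hs : IsChain (· ≤ ·) s) : Ranked s := by
  refine ⟨fun x => (Set.Iio x).ncard, fun a b hab => ?_⟩
  have hIio : Set.Iio b = insert a (Set.Iio a) := by
    ext y
    simp only [Set.mem_Iio, Set.mem_insert_iff]
    refine ⟨fun hyb => ?_, ?_⟩
    · have htotal : y ≤ a ∨ a ≤ y := hs.total y.2 a.2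
      rcases htotal with hya | hay
      · exact hya.eq_or_lt
      · exact .inl (hay.eq_of_not_lt fun hay => hab.2 hay hyb).symm
    · rintro (rfl | hya)
      exacts [hab.lt, hya.trans hab.lt]
  show ((Set.Iio b).ncard : ℤ) = (Set.Iio a).ncard + 1
  rw [hIio, Set.ncard_insert_of_notMem Set.self_notMem_Iio, Nat.cast_succ]

lemma not_ranked_of_covBy_pentagon {α : Type*} [PartialOrder α] {a b c d e : α}
    (hab : a ⋖ b) (hbc : b ⋖ c) (had : a ⋖ d) (hed : e ⋖ d) (hec : e ⋖ c) : ¬ Ranked α := by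
  rintro ⟨ρ, hρ⟩
  linarith [hρ _ _ hab, hρ _ _ hbc, hρ _ _ had, hρ _ _ hed, hρ _ _ hec]

lemma isHeap_of_covBy {E P : Type*} [PartialOrder E] [Finite E] {C : P → P → Prop} {ε : E → P}
    (hC : ∀ p, C p p) (hcomp : ∀ α β : E, C (ε α) (ε β) → α ≤ β ∨ β ≤ α)
    (hcov : ∀ α β : E, α ⋖ β → C (ε α) (ε β)) : IsHeap C ε := by
  refine ⟨hcomp, fun α β => ⟨fun hle => ?_, fun h => ?_⟩⟩
  · have := Fintype.ofFinite E
    classical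
    have := Fintype.toLocallyFiniteOrder (α := E)
    obtain rfl | hlt := hle.eq_or_lt
    · exact .single ⟨le_rfl, hC _⟩
    · exact Relation.TransGen.mono (fun x y hxy => ⟨hxy.le, hcov x y hxy⟩) _ _
        (transGen_covBy_of_lt hlt)
  · exact h.trans_induction_on (fun h => h.1) fun _ _ => le_trans

inductive Pentagon : Type
  | p0 | p1 | p2 | p3 | p4
  deriving DecidableEq

namespace Pentagon

instance : Fintype Pentagon :=
  Fintype.ofList [p0, p1, p2, p3, p4] (by rintro ⟨⟩ <;> simp)

def ltB : Pentagon → Pentagon → Bool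
  | p4, p0 | p0, p1 | p4, p1 | p2, p1 | p2, p3 | p4, p3 => true
  | _, _ => false

instance : PartialOrder Pentagon where
  le a b := a = b ∨ ltB a b
  lt a b := ltB a b
  le_refl _ := .inl rfl
  lt_iff_le_not_ge := by decide
  le_trans := by decide
  le_antisymm := by decide

instance : DecidableRel ((· ≤ ·) : Pentagon → Pentagon → Prop) :=
  fun a b => inferInstanceAs (Decidable (a = b ∨ ltB a b))

instance : DecidableRel ((· < ·) : Pentagon → Pentagon → Prop) :=
  fun a b => inferInstanceAs (Decidable (ltB a b))

instance : DecidableRel ((· ⋖ ·) : Pentagon → Pentagon → Prop) :=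
  fun a b => inferInstanceAs (Decidable (a < b ∧ ∀ ⦃c⦄, a < c → ¬c < b))

def label : Pentagon → Fin 5
  | p0 => 0 | p1 => 1 | p2 => 2 | p3 => 3 | p4 => 4

lemma isChain_Icc (a b : Pentagon) : IsChain (· ≤ ·) (Set.Icc a b) := by
  rintro x ⟨hax, hxb⟩ y ⟨hay, hyb⟩ -
  revert a b x y
  decide

end Pentagon

open Pentagon in
/-- There exist a set of pieces P with a reflexive and symmetric concurrency
relation C and a (finite) heap E with pieces in P such that every subinterval
of E is ranked but E itself is not ranked. -/
theorem exists_heap_subintervals_ranked_not_ranked :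
    ∃ (P E : Type) (iE : PartialOrder E) (_ : Fintype E)
      (C : P → P → Prop) (ε : E → P),
      Reflexive C ∧ Symmetric C ∧ @IsHeap E P iE C ε ∧
      (∀ a b : E, iE.le a b → @SubintervalRanked E iE a b) ∧
      ¬ @Ranked E iE := by
  refine ⟨Fin 5, Pentagon, inferInstance, inferInstance,
    fun p q => p = q ∨ (SimpleGraph.cycleGraph 5).Adj p q, label,
    fun _ => .inl rfl, fun _ _ => Or.imp Eq.symm SimpleGraph.Adj.symm,
    isHeap_of_covBy (fun _ => .inl rfl) (by decide) (by decide),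
    fun a b _ => (isChain_Icc a b).ranked, ?_⟩
  exact not_ranked_of_covBy_pentagon (a := p4) (b := p0) (c := p1) (d := p3) (e := p2)
    (by decide) (by decide) (by decide) (by decide) (by decide)
end

section
/- Let (W, S) be a Coxeter group of type A_n and let E = (E, ≤, ε) be the heap of a fully commutative element of W. Then for every minimal balanced subinterval [a, b] of E, the set S_{[a,b]} consists of precisely two elements, and these two elements have distinct labels. -/
/-- A single commutation move: swap an adjacent pair of commuting generators. -/
def CommMove {B : Type*} (M : CoxeterMatrix B) (ω ω' : List B) : Prop :=
  ∃ (l₁ l₂ : List B) (s t : B), M s t = 2 ∧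
    ω = l₁ ++ s :: t :: l₂ ∧ ω' = l₁ ++ t :: s :: l₂

/-- `w` is fully commutative: any two reduced words for `w` are related by a
sequence of commutation moves. -/
def IsFullyCommutative {B W : Type*} [Group W] {M : CoxeterMatrix B}
    (cs : CoxeterSystem M W) (w : W) : Prop :=
  ∀ ω ω' : List B, cs.IsReduced ω → cs.IsReduced ω' →
    cs.wordProd ω = w → cs.wordProd ω' = w →
      Relation.EqvGen (CommMove M) ω ω'

/-- The Coxeter system is FC-finite: only finitely many fully commutative elements. -/
def FCFinite {B W : Type*} [Group W] {M : CoxeterMatrix B}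
    (cs : CoxeterSystem M W) : Prop :=
  {w : W | IsFullyCommutative cs w}.Finite

/-- A heap with pieces in `B` (concurrency: `m s t ≠ 2`) is the heap of a fully
commutative element for the Coxeter matrix `m` (`m s t = 0` encodes `m(s,t) = ∞`):
there is no convex chain with labels alternating `s, t, s, …` of length `m s t ≥ 3`,
and no covering relation whose endpoints carry the same label. -/
def IsFCHeap {E B : Type*} [PartialOrder E] (m : B → B → ℕ) (ε : E → B) : Prop :=
  IsHeap (fun s t => m s t ≠ 2) ε ∧
  (∀ (s t : B) (k : ℕ), 3 ≤ k → m s t = k →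
    ¬ ∃ α : Fin k → E, StrictMono α ∧
        (∀ γ : E, ∀ i j : Fin k, α i < γ → γ < α j → ∃ l : Fin k, γ = α l) ∧
        (∀ i : Fin k, ε (α i) = if (i : ℕ) % 2 = 0 then s else t)) ∧
  (∀ α β : E, α ⋖ β → ε α ≠ ε β)


/-! Heap order is generated by steps between concurrent pieces, so every element strictly
between `a` and `b` lies above and below some element of `S_{[a,b]}`. If `S_{[a,b]}` were a single
element `c`, then `a < c < b` would be a convex chain labelled `s t s` with `m(s,t) = 3`, which
full commutativity forbids; hence `S_{[a,b]}` has at least two elements. In type `A` their labels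
are `ε a ± 1`. If two of them shared the label `ε a - d`, they would bound a minimal balanced
interval inside `(a, b)` that misses the label `ε a`, so all of its `S`-elements carry `ε a - 2d`;
repeating the argument, the labels would run off the end of the Dynkin diagram. So the labels in
`S_{[a,b]}` are distinct, and there are exactly two of them. -/

open Set

namespace CoxeterMatrix

def IsSimplyLaced {B : Type*} (M : CoxeterMatrix B) : Prop :=
  ∀ s t, s ≠ t → M s t = 2 ∨ M s t = 3

lemma A_apply {n : ℕ} (s t : Fin n) : CoxeterMatrix.A n s t =
    if s = t then 1 else if (t : ℕ) + 1 = s ∨ (s : ℕ) + 1 = t then 3 else 2 :=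
  rfl

lemma A_ne_two_iff {n : ℕ} (s t : Fin n) : CoxeterMatrix.A n s t ≠ 2 ↔ |(s : ℤ) - t| ≤ 1 := by
  rw [A_apply, abs_le]
  split_ifs with hst
  · subst hst; simp
  · omega
  · rw [Fin.ext_iff] at hst; omega

lemma isSimplyLaced_A (n : ℕ) : (CoxeterMatrix.A n).IsSimplyLaced := by
  intro s t hst
  rw [A_apply, if_neg hst]
  split_ifs <;> simp

end CoxeterMatrix

namespace MinBalanced

variable {E P : Type*} [PartialOrder E] {C : P → P → Prop} {ε : E → P} {a b : E}

lemma label_ne_of_mem_Ioo (h : MinBalanced ε a b) {c : E} (hc : c ∈ Ioo a b) : ε c ≠ ε a :=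
  fun hca => (h.2.2 c (Ioo_subset_Icc_self hc) hca).elim hc.1.ne' hc.2.ne

lemma intervalS_subset_Ioo (h : MinBalanced ε a b) : intervalS C ε a b ⊆ Ioo a b := by
  rintro c ⟨hc, hca, -⟩
  refine ⟨hc.1.lt_of_ne ?_, hc.2.lt_of_ne ?_⟩ <;> rintro rfl
  · exact hca rfl
  · exact hca h.2.1.symm

lemma eq_or_eq_or_mem_intervalS (h : MinBalanced ε a b) {c : E} (hc : c ∈ Icc a b)
    (hC : C (ε a) (ε c)) : c = a ∨ c = b ∨ c ∈ intervalS C ε a b := by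
  by_cases hca : ε c = ε a
  · exact (h.2.2 c hc hca).imp_right Or.inl
  · exact Or.inr (Or.inr ⟨hc, hca, hC⟩)

/-- Follow a concurrency chain from `a` up to `γ`: its first step out of `a` lands in
`S_{[a,b]}`. -/
lemma exists_intervalS_le (hheap : IsHeap C ε) (h : MinBalanced ε a b) {γ : E}
    (hγ : γ ∈ Ioo a b) : ∃ x ∈ intervalS C ε a b, x ≤ γ := by
  suffices ∀ δ, Relation.ReflTransGen (fun x y => x ≤ y ∧ C (ε x) (ε y)) a δ → δ < b →
      δ = a ∨ ∃ x ∈ intervalS C ε a b, x ≤ δ from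
    (this γ ((hheap.2 a γ).1 hγ.1.le).to_reflTransGen hγ.2).resolve_left hγ.1.ne'
  intro δ hδ
  induction hδ with
  | refl => exact fun _ => Or.inl rfl
  | tail _ hstep ih =>
    intro hδb
    rcases ih (hstep.1.trans_lt hδb) with rfl | ⟨x, hx, hxc⟩
    · rcases h.eq_or_eq_or_mem_intervalS ⟨hstep.1, hδb.le⟩ hstep.2 with hδ | hδ | hδ
      · exact Or.inl hδ
      · exact absurd hδ hδb.ne
      · exact Or.inr ⟨_, hδ, le_rfl⟩
    · exact Or.inr ⟨x, hx, hxc.trans hstep.1⟩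

lemma exists_le_intervalS (hC : ∀ s t, C s t → C t s) (hheap : IsHeap C ε) (h : MinBalanced ε a b)
    {γ : E} (hγ : γ ∈ Ioo a b) : ∃ y ∈ intervalS C ε a b, γ ≤ y := by
  suffices ∀ δ, Relation.ReflTransGen (fun x y => x ≤ y ∧ C (ε x) (ε y)) δ b → a < δ →
      δ = b ∨ ∃ y ∈ intervalS C ε a b, δ ≤ y from
    (this γ ((hheap.2 γ b).1 hγ.2.le).to_reflTransGen hγ.1).resolve_left hγ.2.ne
  intro δ hδ
  induction hδ using Relation.ReflTransGen.head_induction_on with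
  | refl => exact fun _ => Or.inl rfl
  | head hstep _ ih =>
    intro haδ
    rcases ih (haδ.trans_le hstep.1) with rfl | ⟨y, hy, hcy⟩
    · have hC' : C (ε a) (ε _) := hC _ _ (h.2.1 ▸ hstep.2)
      rcases h.eq_or_eq_or_mem_intervalS ⟨haδ.le, hstep.1⟩ hC' with hδ | hδ | hδ
      · exact absurd hδ haδ.ne'
      · exact Or.inl hδ
      · exact Or.inr ⟨_, hδ, le_rfl⟩
    · exact Or.inr ⟨y, hy, hstep.1.trans hcy⟩

end MinBalanced

lemma exists_minBalanced_of_lt_s11 {E P : Type*} [PartialOrder E] [Finite E] {ε : E → P}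
    {u v : E} (huv : u < v) (hε : ε u = ε v) : ∃ w ≤ v, MinBalanced ε u w := by
  obtain ⟨w, hwv, hmin⟩ :=
    exists_minimal_le_of_wellFoundedLT (fun c => u < c ∧ ε c = ε u) v ⟨huv, hε.symm⟩
  refine ⟨w, hwv, hmin.1.1, hmin.1.2.symm, fun c hc hcu => ?_⟩
  rcases hc.1.eq_or_lt with rfl | huc
  · exact Or.inl rfl
  · exact Or.inr (hmin.eq_of_le ⟨huc, hcu⟩ hc.2)

lemma IsHeap.exists_minBalanced_Icc_subset {E P : Type*} [PartialOrder E] [Finite E]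
    {C : P → P → Prop} {ε : E → P} (hheap : IsHeap C ε) (hrefl : ∀ s, C s s) {T : Set E}
    (hT : T.OrdConnected) {x y : E} (hx : x ∈ T) (hy : y ∈ T) (hne : x ≠ y) (hε : ε x = ε y) :
    ∃ u v, MinBalanced ε u v ∧ ε u = ε x ∧ Icc u v ⊆ T := by
  obtain ⟨u, v, huv, hu, hv, hεu, hεv⟩ :
      ∃ u v, u < v ∧ u ∈ T ∧ v ∈ T ∧ ε u = ε x ∧ ε v = ε x := by
    rcases hheap.1 x y (hε ▸ hrefl (ε x)) with hle | hle
    · exact ⟨x, y, hle.lt_of_ne hne, hx, hy, rfl, hε.symm⟩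
    · exact ⟨y, x, hle.lt_of_ne hne.symm, hy, hx, hε.symm, rfl⟩
  obtain ⟨w, hwv, huw⟩ := exists_minBalanced_of_lt_s11 huv (hεu.trans hεv.symm)
  exact ⟨u, w, huw, hεu, (Icc_subset_Icc_right hwv).trans (hT.out hu hv)⟩

namespace IsFCHeap

variable {E B : Type*} [PartialOrder E] {ε : E → B} {a b : E}

lemma nonempty_Ioo {m : B → B → ℕ} (hheap : IsFCHeap m ε) (h : MinBalanced ε a b) :
    (Ioo a b).Nonempty := by
  by_contra hempty
  exact hheap.2.2 a b ⟨h.1, fun c hac hcb => hempty ⟨c, hac, hcb⟩⟩ h.2.1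

/-- Otherwise `a < c < b` would be a convex chain with labels `s, t, s` where `m s t = 3`. -/
lemma Ioo_ne_singleton {m : B → B → ℕ} (hheap : IsFCHeap m ε) (h : MinBalanced ε a b) {c : E}
    (hc : m (ε a) (ε c) = 3) : Ioo a b ≠ {c} := by
  intro hIoo
  have hc' : c ∈ Ioo a b := hIoo ▸ rfl
  have hchain : ∀ i, ![a, c, b] i ∈ Icc a b := by
    intro i
    fin_cases i
    exacts [⟨le_rfl, h.1.le⟩, Ioo_subset_Icc_self hc', ⟨h.1.le, le_rfl⟩]
  refine hheap.2.1 (ε a) (ε c) 3 le_rfl hc ⟨![a, c, b], ?_, fun γ i j hi hj => ⟨1, ?_⟩, ?_⟩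
  · rw [Fin.strictMono_iff_lt_succ]
    intro i
    fin_cases i
    exacts [hc'.1, hc'.2]
  · have hγ : γ ∈ Ioo a b := ⟨(hchain i).1.trans_lt hi, hj.trans_le (hchain j).2⟩
    rw [hIoo] at hγ
    exact hγ
  · intro i
    fin_cases i <;> simp [h.2.1]

lemma intervalS_nontrivial (M : CoxeterMatrix B) (hM : M.IsSimplyLaced)
    (hheap : IsFCHeap (fun s t => M s t) ε) (h : MinBalanced ε a b) :
    (intervalS (fun s t => M s t ≠ 2) ε a b).Nontrivial := by
  have hsymm : ∀ s t, M s t ≠ 2 → M t s ≠ 2 := fun s t => by rw [M.symmetric]; exact id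
  obtain ⟨γ, hγ⟩ := hheap.nonempty_Ioo h
  obtain ⟨c, hc, -⟩ := h.exists_intervalS_le hheap.1 hγ
  by_contra hsub
  rw [not_nontrivial_iff] at hsub
  refine hheap.Ioo_ne_singleton h ((hM _ _ (Ne.symm hc.2.1)).resolve_left hc.2.2) ?_
  refine eq_singleton_iff_unique_mem.2 ⟨h.intervalS_subset_Ioo hc, fun δ hδ => ?_⟩
  obtain ⟨x, hx, hxδ⟩ := h.exists_intervalS_le hheap.1 hδ
  obtain ⟨y, hy, hδy⟩ := h.exists_le_intervalS hsymm hheap.1 hδ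
  exact le_antisymm (hsub hy hc ▸ hδy) (hsub hx hc ▸ hxδ)

end IsFCHeap

section TypeA

variable {E : Type*} [PartialOrder E] {n : ℕ} {ε : E → Fin n} {a b : E}

lemma abs_label_sub_eq_one_of_mem_intervalS {c : E}
    (hc : c ∈ intervalS (fun s t => CoxeterMatrix.A n s t ≠ 2) ε a b) :
    |(ε c : ℤ) - ε a| = 1 := by
  obtain ⟨-, hne, hC⟩ := hc
  rw [CoxeterMatrix.A_ne_two_iff, abs_le] at hC
  rw [abs_eq zero_le_one]
  have : (ε c : ℕ) ≠ ε a := Fin.val_ne_of_ne hne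
  omega

namespace IsFCHeap

/-- If the neighbour `ε a + d` of `ε a` is missing from `(a, b)`, all of `S_{[a,b]}` carries
the other neighbour `ε a - d`; two such elements bound a new minimal balanced interval, inside
`(a, b)`, from which the label `ε a` is missing. -/
lemma exists_minBalanced_shift [Finite E] (hheap : IsFCHeap (fun s t => CoxeterMatrix.A n s t) ε)
    (h : MinBalanced ε a b) {d : ℤ} (hd : |d| = 1)
    (hforb : ∀ c ∈ Ioo a b, (ε c : ℤ) ≠ ε a + d) :
    ∃ u v, MinBalanced ε u v ∧ (ε u : ℤ) = ε a - d ∧ ∀ c ∈ Ioo u v, (ε c : ℤ) ≠ ε u + d := by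
  have hlabel : ∀ c ∈ intervalS (fun s t => CoxeterMatrix.A n s t ≠ 2) ε a b,
      (ε c : ℤ) = ε a - d := by
    intro c hc
    have h1 := abs_label_sub_eq_one_of_mem_intervalS hc
    have h2 := hforb c (h.intervalS_subset_Ioo hc)
    rw [abs_eq zero_le_one] at h1 hd
    omega
  obtain ⟨x, hx, y, hy, hne⟩ := hheap.intervalS_nontrivial _ (CoxeterMatrix.isSimplyLaced_A n) h
  have hε : ε x = ε y := Fin.ext (by have := hlabel x hx; have := hlabel y hy; omega)
  obtain ⟨u, v, huv, hεu, hsub⟩ := hheap.1.exists_minBalanced_Icc_subset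
    (fun s => by simp) ordConnected_Ioo (h.intervalS_subset_Ioo hx) (h.intervalS_subset_Ioo hy)
    hne hε
  refine ⟨u, v, huv, hεu ▸ hlabel x hx, fun c hc hcd => ?_⟩
  refine h.label_ne_of_mem_Ioo (hsub (Ioo_subset_Icc_self hc)) (Fin.ext ?_)
  rw [hεu, hlabel x hx] at hcd
  omega

lemma exists_mem_Ioo_label_eq [Finite E] (hheap : IsFCHeap (fun s t => CoxeterMatrix.A n s t) ε)
    (h : MinBalanced ε a b) {d : ℤ} (hd : |d| = 1) : ∃ c ∈ Ioo a b, (ε c : ℤ) = ε a + d := by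
  by_contra! hforb
  have hshift : ∀ k : ℕ, ∃ u v, MinBalanced ε u v ∧ (ε u : ℤ) = ε a - k * d ∧
      ∀ c ∈ Ioo u v, (ε c : ℤ) ≠ ε u + d := by
    intro k
    induction k with
    | zero => exact ⟨a, b, h, by simp, hforb⟩
    | succ k ih =>
      obtain ⟨u, v, huv, hεu, hforb'⟩ := ih
      obtain ⟨u', v', huv', hεu', hforb''⟩ := hheap.exists_minBalanced_shift huv hd hforb'
      exact ⟨u', v', huv', by push_cast; linarith, hforb''⟩
  obtain ⟨u, -, -, hεu, -⟩ := hshift n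
  have := (ε u).isLt
  have := (ε a).isLt
  rw [abs_eq zero_le_one] at hd
  rcases hd with rfl | rfl <;> simp only [mul_one, mul_neg] at hεu <;> omega

lemma injOn_intervalS [Finite E] (hheap : IsFCHeap (fun s t => CoxeterMatrix.A n s t) ε)
    (h : MinBalanced ε a b) :
    InjOn ε (intervalS (fun s t => CoxeterMatrix.A n s t ≠ 2) ε a b) := by
  intro x hx y hy hε
  by_contra hne
  obtain ⟨u, v, huv, hεu, hsub⟩ := hheap.1.exists_minBalanced_Icc_subset
    (fun s => by simp) ordConnected_Ioo (h.intervalS_subset_Ioo hx) (h.intervalS_subset_Ioo hy)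
    hne hε
  obtain ⟨c, hc, hεc⟩ := hheap.exists_mem_Ioo_label_eq huv (d := ε a - ε x)
    (by rw [abs_sub_comm]; exact abs_label_sub_eq_one_of_mem_intervalS hx)
  refine h.label_ne_of_mem_Ioo (hsub (Ioo_subset_Icc_self hc)) (Fin.ext ?_)
  rw [hεu] at hεc
  omega

lemma ncard_intervalS_le_two [Finite E]
    (hheap : IsFCHeap (fun s t => CoxeterMatrix.A n s t) ε) (h : MinBalanced ε a b) :
    (intervalS (fun s t => CoxeterMatrix.A n s t ≠ 2) ε a b).ncard ≤ 2 := by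
  have hinj := ((Nat.cast_injective (R := ℤ)).comp Fin.val_injective).comp_injOn
    (hheap.injOn_intervalS h)
  have himage : (fun c => (ε c : ℤ)) '' intervalS (fun s t => CoxeterMatrix.A n s t ≠ 2) ε a b
      ⊆ {(ε a : ℤ) - 1, (ε a : ℤ) + 1} := by
    rintro _ ⟨c, hc, rfl⟩
    have := abs_label_sub_eq_one_of_mem_intervalS hc
    rw [abs_eq zero_le_one] at this
    simp only [mem_insert_iff, mem_singleton_iff]
    omega
  calc _ = ((fun c => (ε c : ℤ)) '' intervalS _ ε a b).ncard := (hinj.ncard_image).symm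
    _ ≤ ({(ε a : ℤ) - 1, (ε a : ℤ) + 1} : Set ℤ).ncard := ncard_le_ncard himage
    _ ≤ 2 := (ncard_insert_le _ _).trans (by rw [ncard_singleton])

end IsFCHeap

end TypeA

/-- Remark 3.3.7 (first part): in the heap of a fully commutative element of a
Coxeter group of type Aₙ, the set S_{[a,b]} of any minimal balanced subinterval
[a, b] consists of precisely two elements, and they have distinct labels. -/
theorem intervalS_typeA_two_elements {E : Type*} [PartialOrder E] [Finite E]
    (n : ℕ) (ε : E → Fin n)
    (hheap : IsFCHeap (fun s t => CoxeterMatrix.Aₙ n s t) ε)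
    (a b : E) (hmb : MinBalanced ε a b) :
    ∃ c d : E, c ≠ d ∧ ε c ≠ ε d ∧
      intervalS (fun s t => CoxeterMatrix.Aₙ n s t ≠ 2) ε a b = {c, d} := by
  -- `Aₙ` is a deprecated alias of `CoxeterMatrix.A`, in which the lemmas above are stated.
  show ∃ c d : E, c ≠ d ∧ ε c ≠ ε d ∧
    intervalS (fun s t => CoxeterMatrix.A n s t ≠ 2) ε a b = {c, d}
  have hnt := hheap.intervalS_nontrivial _ (CoxeterMatrix.isSimplyLaced_A n) hmb
  obtain ⟨c, d, hcd, hS⟩ := ncard_eq_two.1 <|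
    (hheap.ncard_intervalS_le_two hmb).antisymm (one_lt_ncard_iff_nontrivial.2 hnt)
  have hinj := hheap.injOn_intervalS hmb
  rw [hS] at hinj
  exact ⟨c, d, hcd, hinj.ne (mem_insert c {d}) (mem_insert_of_mem c rfl) hcd, hS⟩
end

section
/- Let (W, S) be a Coxeter group with Coxeter matrix m, and let E = (E, ≤, ε) be a heap with pieces in S (with concurrency relation s 𝒞 t iff m(s,t) ≠ 2) that is the heap of a fully commutative element of W. Then every subinterval [a, b] of E, regarded as a subheap with the induced order and labelling, is also the heap of a fully commutative element of W (i.e. it satisfies the same two conditions). -/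
/-!
Intervals are order-convex, and an order-convex subset `s` of an FC heap is again one: a chain
of concurrent steps between two points of `s` never leaves `s`, and neither do the elements
strictly between two points of `s`, so covering relations and convex chains of `s` are
covering relations and convex chains of the heap.
-/

namespace Set.OrdConnected

variable {E : Type*} [PartialOrder E] {s : Set E}

theorem transGen_subtype {r : E → E → Prop} (hs : s.OrdConnected) (hr : ∀ x y, r x y → x ≤ y)
    {x y : E} (h : Relation.TransGen r x y) (hx : x ∈ s) (hy : y ∈ s) :
    Relation.TransGen (fun u v : s => r u v) ⟨x, hx⟩ ⟨y, hy⟩ := by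
  induction h with
  | single h => exact .single h
  | @tail z y hxz hzy ih =>
    have hz : z ∈ s :=
      hs.out hx hy ⟨Relation.TransGen.trans_induction_on hxz (hr _ _) fun _ _ => le_trans,
        hr _ _ hzy⟩
    exact (ih hz).tail hzy

theorem covBy_coe (hs : s.OrdConnected) {x y : s} (h : x ⋖ y) : (x : E) ⋖ y :=
  h.image (OrderEmbedding.subtype _) (by rwa [OrderEmbedding.coe_subtype, Subtype.range_coe])

end Set.OrdConnected

section Subheap

variable {E P : Type*} [PartialOrder E] {s : Set E}

theorem IsHeap.subtype {C : P → P → Prop} {ε : E → P} (h : IsHeap C ε) (hs : s.OrdConnected) :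
    IsHeap C (fun x : s => ε x) := by
  obtain ⟨hcomparable, hgen⟩ := h
  refine ⟨fun x y hxy => hcomparable x y hxy, fun x y => ⟨fun hxy => ?_, fun hxy => ?_⟩⟩
  · exact hs.transGen_subtype (fun _ _ => And.left) ((hgen x y).mp hxy) x.2 y.2
  · exact (hgen x y).mpr (hxy.lift Subtype.val fun _ _ => id)

theorem IsFCHeap.subtype {m : P → P → ℕ} {ε : E → P} (h : IsFCHeap m ε) (hs : s.OrdConnected) :
    IsFCHeap m (fun x : s => ε x) := by
  obtain ⟨hheap, hchain, hcov⟩ := h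
  refine ⟨hheap.subtype hs, fun p q k hk hmk ⟨α, hmono, hconvex, hlabel⟩ => ?_,
    fun x y hxy => hcov x y (hs.covBy_coe hxy)⟩
  refine hchain p q k hk hmk ⟨fun i => α i, Subtype.strictMono_coe _ |>.comp hmono, ?_, hlabel⟩
  intro γ i j hiγ hγj
  obtain ⟨l, hl⟩ := hconvex ⟨γ, hs.out (α i).2 (α j).2 ⟨hiγ.le, hγj.le⟩⟩ i j hiγ hγj
  exact ⟨l, congrArg Subtype.val hl⟩

end Subheap

theorem subinterval_isFCHeap_general {B E : Type*} [PartialOrder E]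
    (M : CoxeterMatrix B) (ε : E → B)
    (hheap : IsFCHeap (fun s t => M s t) ε) (a b : E) :
    IsFCHeap (fun s t => M s t) (fun x : Set.Icc a b => ε x) :=
  hheap.subtype Set.ordConnected_Icc

/-- Every subinterval [a, b] of the heap of a fully commutative element,
regarded as a subheap with the induced order and labelling, is again the heap
of a fully commutative element of the same Coxeter group. -/
theorem subinterval_isFCHeap {B E : Type*} [PartialOrder E] [Finite E]
    (M : CoxeterMatrix B) (ε : E → B)
    (hheap : IsFCHeap (fun s t => M s t) ε) (a b : E) (hab : a ≤ b) :
    IsFCHeap (fun s t => M s t) (fun x : Set.Icc a b => ε x) :=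
  subinterval_isFCHeap_general M ε hheap a b
end

section
/- Let (E, ≤, ε) be a heap with pieces in P and concurrency relation 𝒞 whose concurrency subgraph contains no circuits, and let [a, b] be a minimal balanced subinterval of E such that all elements of S_{[a,b]} have the same label. Write the elements of S_{[a,b]} as c₁ < c₂ < ⋯ < c_r (they are totally ordered, having a common label). Then a < c₁ and c_r < b are covering relations in E, there are no other covering relations of the form a < c′ or c′ < b with c′ ∈ [a, b], and as a set the subinterval [a, b] equals {a, b} together with the subinterval [c₁, c_r]. -/
/-- Second case in the proof of Theorem 3.2.3: if the concurrency subgraph of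
the heap E has no circuits and [a, b] is a minimal balanced subinterval all of
whose elements of S_{[a,b]} have the same label, with least element c₁ and
greatest element cr, then a ⋖ c₁ and cr ⋖ b, these are the only covering
relations of the form a ⋖ c' or c' ⋖ b with c' ∈ [a, b], and as a set
[a, b] = {a, b} ∪ [c₁, cr]. -/
theorem subinterval_structure_of_same_labels {E P : Type*} [PartialOrder E]
    [Finite E] (C : P → P → Prop) (hrefl : Reflexive C) (hsymm : Symmetric C)
    (ε : E → P) (hheap : IsHeap C ε) (hacyclic : NoCircuits C ε)
    (a b : E) (hmb : MinBalanced ε a b)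
    (hsame : ∀ c ∈ intervalS C ε a b, ∀ d ∈ intervalS C ε a b, ε c = ε d)
    (c₁ cr : E)
    (h1 : IsLeast (intervalS C ε a b) c₁)
    (hr : IsGreatest (intervalS C ε a b) cr) :
    (a ⋖ c₁) ∧ (cr ⋖ b) ∧
    (∀ c' ∈ Set.Icc a b, a ⋖ c' → c' = c₁) ∧
    (∀ c' ∈ Set.Icc a b, c' ⋖ b → c' = cr) ∧
    Set.Icc a b = {a, b} ∪ Set.Icc c₁ cr := by
  obtain ⟨hcomp, hgen⟩ := hheap
  obtain ⟨hab, hεab, hmin⟩ := hmb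
  -- covering relations are concurrent
  have hcov : ∀ x y : E, x ⋖ y → C (ε x) (ε y) := by
    intro x y hxy
    have h : Relation.TransGen (fun u v : E => u ≤ v ∧ C (ε u) (ε v)) x y :=
      (hgen x y).1 hxy.le
    revert hxy
    induction h with
    | single h => exact fun _ => h.2
    | @tail w z hxw hwz ih =>
      intro hxz
      have hxw' : x ≤ w := (hgen x w).2 hxw
      rcases hxw'.eq_or_lt with rfl | hlt
      · exact hwz.2
      · rcases hwz.1.eq_or_lt with rfl | hlt2
        · exact ih hxz
        · exact absurd hlt2 (hxz.2 hlt)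
  -- key: any element of [a,b] other than a,b lies in [c₁, cr]
  have key : ∀ c, a ≤ c → c ≤ b → c ≠ a → c ≠ b → c₁ ≤ c ∧ c ≤ cr := by
    intro c hac hcb hca hcbne
    have hac' : a < c := hac.lt_of_ne (Ne.symm hca)
    have hcb' : c < b := hcb.lt_of_ne hcbne
    constructor
    · obtain ⟨d, hd, hdc⟩ := hac'.exists_covby_le
      have hdS : d ∈ intervalS C ε a b := by
        refine ⟨⟨hd.le, hdc.trans hcb⟩, ?_, hcov a d hd⟩
        intro hεd
        rcases hmin d ⟨hd.le, hdc.trans hcb⟩ hεd with rfl | rfl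
        · exact hd.lt.ne rfl
        · exact (hdc.trans_lt hcb').ne rfl
      exact (h1.2 hdS).trans hdc
    · obtain ⟨e, hce, he⟩ := hcb'.exists_le_covby
      have hCe : C (ε a) (ε e) := by
        rw [hεab]; exact hsymm (hcov e b he)
      have heS : e ∈ intervalS C ε a b := by
        refine ⟨⟨hac.trans hce, he.le⟩, ?_, hCe⟩
        intro hεe
        rcases hmin e ⟨hac.trans hce, he.le⟩ hεe with rfl | rfl
        · exact (hac'.trans_le hce).ne rfl
        · exact he.lt.ne rfl
      exact hce.trans (hr.2 heS)
  obtain ⟨⟨⟨hac₁, hc₁b⟩, hεc₁, _⟩, hleast⟩ := h1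
  obtain ⟨⟨⟨hacr, hcrb⟩, hεcr, _⟩, hgrt⟩ := hr
  have hac₁' : a < c₁ := hac₁.lt_of_ne (fun h => hεc₁ (congrArg ε h).symm)
  have hc₁b' : c₁ < b := hc₁b.lt_of_ne (fun h => hεc₁ (by rw [h, ← hεab]))
  have hacr' : a < cr := hacr.lt_of_ne (fun h => hεcr (congrArg ε h).symm)
  have hcrb' : cr < b := hcrb.lt_of_ne (fun h => hεcr (by rw [h, ← hεab]))
  have cov1 : a ⋖ c₁ := by
    refine ⟨hac₁', fun x hax hxc₁ => ?_⟩
    have := (key x hax.le (hxc₁.le.trans hc₁b) hax.ne' (hxc₁.trans_le hc₁b).ne).1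
    exact absurd hxc₁ this.not_gt
  have cov2 : cr ⋖ b := by
    refine ⟨hcrb', fun x hcrx hxb => ?_⟩
    have := (key x (hacr.trans hcrx.le) hxb.le (hacr.trans_lt hcrx).ne' hxb.ne).2
    exact absurd hcrx this.not_gt
  refine ⟨cov1, cov2, ?_, ?_, ?_⟩
  · rintro c' ⟨hac', hc'b⟩ hcov'
    have hne : c' ≠ b := by
      rintro rfl
      exact hcov'.2 hac₁' hc₁b'
    have hle := (key c' hac' hc'b hcov'.lt.ne' hne).1
    rcases hle.eq_or_lt with h | h
    · exact h.symm
    · exact absurd h (hcov'.2 hac₁')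
  · rintro c' ⟨hac', hc'b⟩ hcov'
    have hne : c' ≠ a := by
      rintro rfl
      exact hcov'.2 hacr' hcrb'
    have hle := (key c' hac' hc'b hne hcov'.lt.ne).2
    rcases hle.eq_or_lt with h | h
    · exact h
    · exact absurd h (fun h' => hcov'.2 h' hcrb')
  · ext c
    constructor
    · rintro ⟨hac, hcb⟩
      by_cases hca : c = a
      · exact Or.inl (Or.inl hca)
      by_cases hcbn : c = b
      · exact Or.inl (Or.inr hcbn)
      · exact Or.inr ⟨(key c hac hcb hca hcbn).1, (key c hac hcb hca hcbn).2⟩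
    · rintro (h | ⟨h1', h2'⟩)
      · rcases h with rfl | rfl
        · exact ⟨le_refl _, hab.le⟩
        · exact ⟨hab.le, le_refl _⟩
      · exact ⟨hac₁.trans h1', h2'.trans hcrb⟩
end
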